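/- arXiv:2312.00507 — 2 statements merged into one kernel-verified Lean document; each statement's English description precedes it below -/
import Mathlib

section
/- If at each step of the process exactly the vertices along a path of length k are incremented (each vertex on the path incremented once per occurrence), and every step's path starts at a vertex of U, then the total number of increments performed over the whole run is at most c·k·|V|. -/
/-!
Every step raises the count of its start vertex by at least one, and counts never decrease.
Hence the successive times at which a fixed vertex `v` starts a step see strictly increasing
values of `count · v`, all below `c`: at most `c` steps start at `v`, so there are at most
`c * |V|` steps, each performing `k` increments.
-/

open Finset

section StrictIncrease

variable {V : Type*} [DecidableEq V] {T c : ℕ} {count : ℕ → V → ℕ} {s : ℕ → V}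

theorem card_filter_range_eq_le_of_strict_increase
    (hmono : ∀ t < T, ∀ v, count t v ≤ count (t + 1) v)
    (hinc : ∀ t < T, count t (s t) < count (t + 1) (s t))
    (hlt : ∀ t < T, count t (s t) < c) (v : V) :
    #{t ∈ range T | s t = v} ≤ c := by
  have hmonoOn : MonotoneOn (count · v) (Set.Iic T) :=
    monotoneOn_of_le_succ Set.ordConnected_Iic fun t _ _ ht => by
      rw [Order.succ_eq_add_one, Set.mem_Iic] at ht
      exact hmono t (by omega) v
  have hstrict : StrictMonoOn (count · v) ↑{t ∈ range T | s t = v} := by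
    intro a ha b hb hab
    simp only [coe_filter, mem_range, Set.mem_ofPred_eq] at ha hb
    calc count a v < count (a + 1) v := ha.2 ▸ hinc a ha.1
      _ ≤ count b v := hmonoOn (Set.mem_Iic.2 ha.1) (Set.mem_Iic.2 hb.1.le) hab
  have hmaps : Set.MapsTo (count · v) ↑{t ∈ range T | s t = v} ↑(range c) := by
    intro t ht
    simp only [coe_filter, mem_range, Set.mem_ofPred_eq] at ht
    simpa [← ht.2] using hlt t ht.1
  simpa using card_le_card_of_injOn _ hmaps hstrict.injOn

theorem le_mul_card_of_strict_increase [Fintype V]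
    (hmono : ∀ t < T, ∀ v, count t v ≤ count (t + 1) v)
    (hinc : ∀ t < T, count t (s t) < count (t + 1) (s t))
    (hlt : ∀ t < T, count t (s t) < c) :
    T ≤ c * Fintype.card V := by
  calc T = ∑ v, #{t ∈ range T | s t = v} := by
        simpa using card_eq_sum_card_fiberwise (s := range T) (t := univ) fun t _ => mem_univ (s t)
    _ ≤ ∑ _v : V, c :=
        sum_le_sum fun v _ => card_filter_range_eq_le_of_strict_increase hmono hinc hlt v
    _ = c * Fintype.card V := by rw [sum_const, card_univ, smul_eq_mul, mul_comm]

end StrictIncrease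

theorem worklist_total_increments_bound_general
    {V : Type*} [Fintype V] [DecidableEq V]
    (c k : ℕ) (hk : 1 ≤ k)
    (T : ℕ) (count : ℕ → V → ℕ) (π : ℕ → Fin k → V)
    (hstart : ∀ t, ∀ ht : t < T, count t (π t ⟨0, hk⟩) < c)
    (hstep : ∀ t < T, ∀ v : V,
      count (t + 1) v = count t v + (Finset.univ.filter fun i : Fin k => π t i = v).card) :
    T * k ≤ c * k * Fintype.card V := by
  have hmono : ∀ t < T, ∀ v, count t v ≤ count (t + 1) v := fun t ht v => by
    rw [hstep t ht v]
    exact Nat.le_add_right _ _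
  have hinc : ∀ t < T, count t (π t ⟨0, hk⟩) < count (t + 1) (π t ⟨0, hk⟩) := fun t ht => by
    rw [hstep t ht]
    exact Nat.lt_add_of_pos_right (card_pos.2 ⟨⟨0, hk⟩, by simp⟩)
  calc T * k ≤ c * Fintype.card V * k :=
        Nat.mul_le_mul_right k (le_mul_card_of_strict_increase hmono hinc hstart)
    _ = c * k * Fintype.card V := by ring

/-- If each step increments exactly the vertices along a path of length `k` in
the graph `E` (once per occurrence), and each path starts at a vertex of the
worklist `U = {v | count v < c}`, then the total number of increments performed
over the run, which is `T * k`, is at most `c * k * |V|`. -/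
theorem worklist_total_increments_bound
    {V : Type*} [Fintype V] [DecidableEq V]
    (E : V → V → Prop) (c k : ℕ) (hc : 1 ≤ c) (hk : 1 ≤ k)
    (T : ℕ) (count : ℕ → V → ℕ) (π : ℕ → Fin k → V)
    (h0 : ∀ v, count 0 v = 0)
    (hwalk : ∀ t < T, ∀ i : Fin k, ∀ h : (i : ℕ) + 1 < k,
      E (π t i) (π t ⟨(i : ℕ) + 1, h⟩))
    (hstart : ∀ t, ∀ ht : t < T, count t (π t ⟨0, hk⟩) < c)
    (hstep : ∀ t < T, ∀ v : V,
      count (t + 1) v = count t v + (Finset.univ.filter fun i : Fin k => π t i = v).card) :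
    T * k ≤ c * k * Fintype.card V :=
  worklist_total_increments_bound_general c k hk T count π hstart hstep
end

section
/- Copy propagation is semantics-preserving on straight-line programs: in a sequence of assignments, if statement i is 'y := x' and x is not reassigned between statement i and a later use of y at statement j (and y is not reassigned in between), then replacing that use of y by x yields a program computing the same final state from any initial state. -/
inductive Expr (Var : Type) where
  | var : Var → Expr Var
  | const : ℤ → Expr Var
  | add : Expr Var → Expr Var → Expr Var
  | sub : Expr Var → Expr Var → Expr Var
  | mul : Expr Var → Expr Var → Expr Var

def Expr.eval {Var : Type} (σ : Var → ℤ) : Expr Var → ℤ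
  | .var x => σ x
  | .const n => n
  | .add a b => a.eval σ + b.eval σ
  | .sub a b => a.eval σ - b.eval σ
  | .mul a b => a.eval σ * b.eval σ

/-- Substitute variable `y` by variable `x` in an expression. -/
def Expr.substVar {Var : Type} [DecidableEq Var] (y x : Var) : Expr Var → Expr Var
  | .var z => if z = y then .var x else .var z
  | .const n => .const n
  | .add a b => .add (a.substVar y x) (b.substVar y x)
  | .sub a b => .sub (a.substVar y x) (b.substVar y x)
  | .mul a b => .mul (a.substVar y x) (b.substVar y x)

/-- A straight-line program is a list of assignments `v := e`; `run` executes
it sequentially on a store. -/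
def run {Var : Type} [DecidableEq Var] : List (Var × Expr Var) → (Var → ℤ) → (Var → ℤ)
  | [], σ => σ
  | (v, e) :: p, σ => run p (Function.update σ v (e.eval σ))

lemma run_append {Var : Type} [DecidableEq Var] (p q : List (Var × Expr Var)) (σ : Var → ℤ) :
    run (p ++ q) σ = run q (run p σ) := by
  induction p generalizing σ with
  | nil => rfl
  | cons s p ih => cases s; simp [run, ih]

lemma run_preserve {Var : Type} [DecidableEq Var] (p : List (Var × Expr Var)) (x y : Var)
    (hmid : ∀ s ∈ p, s.1 ≠ x ∧ s.1 ≠ y) (σ : Var → ℤ) (h : σ y = σ x) :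
    run p σ y = run p σ x := by
  induction p generalizing σ with
  | nil => exact h
  | cons s p ih =>
    cases s with
    | mk v e =>
      have := hmid (v, e) (by simp)
      apply ih (fun s hs => hmid s (List.mem_cons_of_mem _ hs))
      simp [Function.update_of_ne (show y ≠ v from fun hh => this.2 hh.symm),
        Function.update_of_ne (show x ≠ v from fun hh => this.1 hh.symm), h]

lemma eval_substVar {Var : Type} [DecidableEq Var] (x y : Var) (e : Expr Var)
    (σ : Var → ℤ) (h : σ y = σ x) : (e.substVar y x).eval σ = e.eval σ := by
  induction e with
  | var v => by_cases hv : v = y <;> simp [Expr.substVar, Expr.eval, hv, h]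
  | const n => rfl
  | add a b iha ihb => simp [Expr.substVar, Expr.eval, iha, ihb]
  | sub a b iha ihb => simp [Expr.substVar, Expr.eval, iha, ihb]
  | mul a b iha ihb => simp [Expr.substVar, Expr.eval, iha, ihb]

/-- Copy propagation is semantics-preserving: if statement `i` is `y := x`,
and neither `x` nor `y` is reassigned between `i` and a later statement
`z := e` that uses `y`, then replacing the uses of `y` in `e` by `x` yields a
program computing the same final store from any initial store. -/
theorem copyPropagation_preserves_semantics {Var : Type} [DecidableEq Var]
    (p₁ p₂ p₃ : List (Var × Expr Var)) (x y z : Var) (e : Expr Var)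
    (hmid : ∀ s ∈ p₂, s.1 ≠ x ∧ s.1 ≠ y) :
    ∀ σ : Var → ℤ,
      run (p₁ ++ [(y, .var x)] ++ p₂ ++ [(z, e)] ++ p₃) σ
        = run (p₁ ++ [(y, .var x)] ++ p₂ ++ [(z, e.substVar y x)] ++ p₃) σ := by
  intro σ
  simp only [run_append]
  set τ := run p₂ (run [(y, Expr.var x)] (run p₁ σ)) with hτ
  have hy : τ y = τ x := by
    apply run_preserve p₂ x y hmid
    by_cases hxy : x = y <;>
      simp [run, Expr.eval, Function.update, hxy]
  have : run [(z, e)] τ = run [(z, e.substVar y x)] τ := by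
    simp [run, eval_substVar x y e τ hy]
  rw [this]
end
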